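/- For m ≥ 1, let T_m denote the m×m real symmetric tridiagonal matrix with diagonal entries α_1, …, α_m and off-diagonal entries β_2, …, β_m, and let T_{m+1} be its (m+1)×(m+1) extension with additional diagonal entry α_{m+1} and off-diagonal entry β_{m+1}. Let z ∈ ℂ be such that T_m − z·I and T_{m+1} − z·I are invertible. Then ((T_{m+1} − z·I)⁻¹)_{1,1} − ((T_m − z·I)⁻¹)_{1,1} = −β_{m+1}·((T_{m+1} − z·I)⁻¹)_{m+1,1}·((T_m − z·I)⁻¹)_{m,1}. -/

import Mathlib

open Matrix

/-- The `m × m` Jacobi (real symmetric tridiagonal) matrix with diagonal entries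
`α 1, …, α m` and off-diagonal entries `β 2, …, β m`, viewed as a complex matrix
(all entries are real). Indices of the matrix are zero-based. -/
noncomputable def jacobiC (a b : ℕ → ℝ) (m : ℕ) : Matrix (Fin m) (Fin m) ℂ :=
  Matrix.of fun i j =>
    if (i : ℕ) = (j : ℕ) then (a ((i : ℕ) + 1) : ℂ)
    else if (i : ℕ) + 1 = (j : ℕ) then (b ((i : ℕ) + 2) : ℂ)
    else if (j : ℕ) + 1 = (i : ℕ) then (b ((j : ℕ) + 2) : ℂ)
    else 0

/-! Write `G = (T_{m+1} - z)⁻¹` and `R = (T_m - z)⁻¹`. Multiplying `R` into the first `m` rows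
of `(T_{m+1} - z) G = 1` and splitting off the last column gives the bordering identity
`R = G|_{m×m} + (R u) G_{m+1,·}`, with `u` the last column of `T_{m+1} - z` above the diagonal.
For a Jacobi matrix `u = β_{m+1} e_m`, and `R` is symmetric, so the `(1,1)` entry of this
identity is the claim. -/

namespace Matrix

variable {K : Type*} [CommRing K] {m : ℕ}

theorem inv_submatrix_castSucc_apply (M : Matrix (Fin (m + 1)) (Fin (m + 1)) K)
    (hM : IsUnit M.det) (hB : IsUnit (M.submatrix Fin.castSucc Fin.castSucc).det)
    (i j : Fin m) :
    (M.submatrix Fin.castSucc Fin.castSucc)⁻¹ i j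
      = M⁻¹ i.castSucc j.castSucc
        + (∑ l, (M.submatrix Fin.castSucc Fin.castSucc)⁻¹ i l * M l.castSucc (Fin.last m))
          * M⁻¹ (Fin.last m) j.castSucc := by
  set B := M.submatrix Fin.castSucc Fin.castSucc
  have hBB : B⁻¹ * B = 1 := nonsing_inv_mul B hB
  have hMM : M * M⁻¹ = 1 := mul_nonsing_inv M hM
  calc B⁻¹ i j = ∑ l, B⁻¹ i l * (M * M⁻¹) l.castSucc j.castSucc := by
        simp [hMM, one_apply, Fin.castSucc_inj]
    _ = ∑ k, (∑ l, B⁻¹ i l * M l.castSucc k) * M⁻¹ k j.castSucc := by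
        simp only [mul_apply, Finset.mul_sum, Finset.sum_mul, mul_assoc]
        exact Finset.sum_comm
    _ = ∑ k : Fin m, (B⁻¹ * B) i k * M⁻¹ k.castSucc j.castSucc
        + (∑ l, B⁻¹ i l * M l.castSucc (Fin.last m)) * M⁻¹ (Fin.last m) j.castSucc := by
        rw [Fin.sum_univ_castSucc]; rfl
    _ = _ := by simp [hBB, one_apply]

end Matrix

theorem jacobiC_isSymm (a b : ℕ → ℝ) (m : ℕ) : (jacobiC a b m).IsSymm := by
  ext i j
  simp only [transpose_apply, jacobiC, of_apply]
  split_ifs <;> first | rfl | omega | (congr 2; omega)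

theorem jacobiC_submatrix_castSucc (a b : ℕ → ℝ) (m : ℕ) :
    (jacobiC a b (m + 1)).submatrix Fin.castSucc Fin.castSucc = jacobiC a b m := by
  ext i j
  simp [jacobiC]

theorem jacobiC_castSucc_last (a b : ℕ → ℝ) (m : ℕ) (i : Fin m) :
    jacobiC a b (m + 1) i.castSucc (Fin.last m)
      = if (i : ℕ) + 1 = m then (b (m + 1) : ℂ) else 0 := by
  simp only [jacobiC, of_apply, Fin.val_castSucc, Fin.val_last]
  split_ifs <;> first | rfl | omega | (congr 2; omega)

theorem stmt6 (m : ℕ) (hm : 1 ≤ m) (α β : ℕ → ℝ) (z : ℂ)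
    (hinv : IsUnit (jacobiC α β m - z • (1 : Matrix (Fin m) (Fin m) ℂ)).det)
    (hinv' :
      IsUnit (jacobiC α β (m + 1) - z • (1 : Matrix (Fin (m + 1)) (Fin (m + 1)) ℂ)).det) :
    ((jacobiC α β (m + 1) - z • 1)⁻¹) 0 0 - ((jacobiC α β m - z • 1)⁻¹) ⟨0, hm⟩ ⟨0, hm⟩
      = -(β (m + 1) : ℂ) * (((jacobiC α β (m + 1) - z • 1)⁻¹) (Fin.last m) 0)
          * (((jacobiC α β m - z • 1)⁻¹) ⟨m - 1, by omega⟩ ⟨0, hm⟩) := by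
  set M := jacobiC α β (m + 1) - z • (1 : Matrix (Fin (m + 1)) (Fin (m + 1)) ℂ)
  set R := (jacobiC α β m - z • (1 : Matrix (Fin m) (Fin m) ℂ))⁻¹
  have hsub : M.submatrix Fin.castSucc Fin.castSucc = jacobiC α β m - z • 1 := by
    rw [← jacobiC_submatrix_castSucc α β m]
    ext i j
    simp [M, one_apply]
  have hlast (l : Fin m) :
      M l.castSucc (Fin.last m) = if (l : ℕ) + 1 = m then (β (m + 1) : ℂ) else 0 := by
    simp [M, jacobiC_castSucc_last, one_apply, (Fin.castSucc_lt_last l).ne]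
  have hcol : ∑ l, R ⟨0, hm⟩ l * M l.castSucc (Fin.last m)
      = R ⟨0, hm⟩ ⟨m - 1, by omega⟩ * β (m + 1) := by
    rw [Finset.sum_eq_single ⟨m - 1, by omega⟩]
    · rw [hlast, if_pos (by simp; omega)]
    · intro l _ hl
      rw [hlast, if_neg (fun h => hl (Fin.ext (by simp; omega))), mul_zero]
    · simp
  have hsymm : R ⟨0, hm⟩ ⟨m - 1, by omega⟩ = R ⟨m - 1, by omega⟩ ⟨0, hm⟩ :=
    ((jacobiC_isSymm α β m).sub (isSymm_one.smul z)).inv.apply _ _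
  have hborder := M.inv_submatrix_castSucc_apply hinv' (hsub ▸ hinv) ⟨0, hm⟩ ⟨0, hm⟩
  rw [hsub, hcol, hsymm, show (⟨0, hm⟩ : Fin m).castSucc = 0 from rfl] at hborder
  linear_combination -hborder
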